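/- Let Δ be a balanced normal d-pseudomanifold and let S be a two-element subset of [d] such that Γ_S(Δ) ≥ 1. Then there exists a (d−3)-dimensional face σ of the rank-selected subcomplex Δ_{[d]∖S} such that deg(σ, Δ_{[d]∖S}) ≥ 3, i.e., the link of σ in Δ_{[d]∖S} contains at least 3 vertices. -/

import Mathlib

/-- A finite abstract simplicial complex with vertex set contained in `ℕ`:
a finite collection of finite sets (faces) closed under taking subsets. -/
structure SComplex where
  faces : Finset (Finset ℕ)
  down_closed : ∀ σ ∈ faces, ∀ τ, τ ⊆ σ → τ ∈ faces

namespace SComplex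

/-- The facets: the inclusion-maximal faces. -/
def facets (Δ : SComplex) : Finset (Finset ℕ) :=
  Δ.faces.filter fun σ => ∀ τ ∈ Δ.faces, σ ⊆ τ → σ = τ

/-- `Δ` is pure of dimension `d`: every facet has exactly `d+1` vertices. -/
def Pure (Δ : SComplex) (d : ℕ) : Prop :=
  ∀ σ ∈ Δ.facets, σ.card = d + 1

/-- The link of a face `σ`:  `lk (σ,Δ) = {γ ∈ Δ : γ ∩ σ = ∅ and γ ∪ σ ∈ Δ}`. -/
def lk (Δ : SComplex) (σ : Finset ℕ) : SComplex where
  faces := Δ.faces.filter fun γ => γ ∩ σ = ∅ ∧ γ ∪ σ ∈ Δ.faces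
  down_closed := by
    intro γ hγ τ hτ
    rw [Finset.mem_filter] at hγ ⊢
    refine ⟨Δ.down_closed γ hγ.1 τ hτ, ?_, ?_⟩
    · exact Finset.subset_empty.1 (hγ.2.1 ▸ Finset.inter_subset_inter hτ Finset.Subset.rfl)
    · exact Δ.down_closed _ hγ.2.2 _ (Finset.union_subset_union hτ Finset.Subset.rfl)

/-- The number of vertices of a complex. -/
def vertCount (Δ : SComplex) : ℕ := (Δ.faces.filter fun σ => σ.card = 1).card

/-- The degree of a face: the number of vertices of its link. -/
def deg (Δ : SComplex) (σ : Finset ℕ) : ℕ := (Δ.lk σ).vertCount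

/-- Connectivity of a complex: any two vertices are joined by an edge-path. -/
def Conn (Δ : SComplex) : Prop :=
  ∀ u v : ℕ, {u} ∈ Δ.faces → {v} ∈ Δ.faces →
    Relation.ReflTransGen (fun a b => a ≠ b ∧ ({a, b} : Finset ℕ) ∈ Δ.faces) u v

/-- A normal `d`-pseudomanifold: a pure `d`-dimensional complex in which every
`(d-1)`-face is contained in exactly two facets, any two facets are connected by a
sequence of facets in which consecutive facets share a `(d-1)`-face, and the link of
every face of dimension at most `d-2` is connected. -/
def IsNormalPseudomanifold (Δ : SComplex) (d : ℕ) : Prop :=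
  Δ.faces.Nonempty ∧ Δ.Pure d ∧
  (∀ σ ∈ Δ.faces, σ.card = d → (Δ.facets.filter fun τ => σ ⊆ τ).card = 2) ∧
  (∀ σ ∈ Δ.facets, ∀ τ ∈ Δ.facets,
    Relation.ReflTransGen
      (fun α β => α ∈ Δ.facets ∧ β ∈ Δ.facets ∧ (α ∩ β).card = d) σ τ) ∧
  (∀ σ ∈ Δ.faces, σ.card + 1 ≤ d → (Δ.lk σ).Conn)

/-- The Euler characteristic `χ(Δ) = Σ_i (-1)^i f_i(Δ)`. -/
def eulerChar (Δ : SComplex) : ℤ :=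
  ∑ σ ∈ Δ.faces.filter (fun σ => σ ≠ ∅), (-1 : ℤ) ^ (σ.card + 1)

/-- The geometric carrier `‖Δ‖` of a complex, realized in `ℝ^ℕ`. -/
def carrier (Δ : SComplex) : Set (ℕ → ℝ) :=
  {f | ∃ σ ∈ Δ.faces, (∀ v, v ∉ σ → f v = 0) ∧ (∀ v, 0 ≤ f v) ∧ ∑ v ∈ σ, f v = 1}

/-- The 1-skeleton of `Δ`, as a simple graph on `ℕ`. -/
def graph (Δ : SComplex) : SimpleGraph ℕ where
  Adj u v := u ≠ v ∧ ({u, v} : Finset ℕ) ∈ Δ.faces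
  symm := by
    refine ⟨?_⟩
    rintro u v ⟨h1, h2⟩
    exact ⟨h1.symm, by rwa [Finset.pair_comm]⟩
  loopless := ⟨fun v h => h.1 rfl⟩

end SComplex

/-- A balanced complex of dimension `d`: a simplicial complex together with a proper
vertex coloring by the `d+1` colors `[d] = {0,…,d}`. -/
structure BalancedComplex (d : ℕ) extends SComplex where
  κ : ℕ → Fin (d + 1)
  proper : ∀ σ ∈ faces, ∀ u ∈ σ, ∀ v ∈ σ, κ u = κ v → u = v

namespace BalancedComplex

variable {d : ℕ}

/-- The flag f-number `f_S`: the number of faces with color set exactly `S`. -/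
def fS (Δ : BalancedComplex d) (S : Finset (Fin (d + 1))) : ℕ :=
  (Δ.faces.filter fun σ => σ.image Δ.κ = S).card

/-- `f_i`: the number of `i`-dimensional faces. -/
def fNum (Δ : BalancedComplex d) (i : ℕ) : ℕ :=
  (Δ.faces.filter fun σ => σ.card = i + 1).card

/-- The rank-selected subcomplex `Δ_S`. -/
def restrict (Δ : BalancedComplex d) (S : Finset (Fin (d + 1))) : SComplex where
  faces := Δ.faces.filter fun σ => σ.image Δ.κ ⊆ S
  down_closed := by
    intro σ hσ τ hτ
    rw [Finset.mem_filter] at hσ ⊢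
    exact ⟨Δ.down_closed σ hσ.1 τ hτ, (Finset.image_subset_image hτ).trans hσ.2⟩

/-- `Γ_S(Δ) = f_S(Δ) - Σ_{i ∈ S} f_{{i}}(Δ)`. -/
def Gamma (Δ : BalancedComplex d) (S : Finset (Fin (d + 1))) : ℤ :=
  (Δ.fS S : ℤ) - ∑ i ∈ S, (Δ.fS {i} : ℤ)

/-- The balanced ε-genus
`ρ_ε(Δ) = 1 - ((1-d)/4)·f_d(Δ) - (1/2)·Σ_{i ∈ Z_{d+1}} f_{d-2}^{ε_i ε_{i+1}}(Δ)`,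
where a cyclic permutation of `[d]` is recorded as a permutation `ε` of `Fin (d+1)`
read cyclically. -/
def rho (Δ : BalancedComplex d) (ε : Equiv.Perm (Fin (d + 1))) : ℚ :=
  1 - (1 - (d : ℚ)) / 4 * (Δ.fNum d : ℚ)
    - (1 / 2) * ∑ i : Fin (d + 1), (Δ.fS (Finset.univ \ {ε i, ε (i + 1)}) : ℚ)

/-- The balanced genus `𝒢(Δ)`: the minimum of `ρ_ε(Δ)` over all cyclic permutations. -/
def genus (Δ : BalancedComplex d) : ℚ :=
  (Finset.univ.image Δ.rho).min'
    (Finset.Nonempty.image ⟨1, Finset.mem_univ 1⟩ Δ.rho)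

end BalancedComplex

namespace S15

open Finset Relation

variable {d : ℕ}

lemma card_image_face (Δ : BalancedComplex d) {σ : Finset ℕ} (hσ : σ ∈ Δ.faces) :
    (σ.image Δ.κ).card = σ.card :=
  Finset.card_image_of_injOn (fun u hu v hv h => Δ.proper σ hσ u hu v hv h)

lemma exists_facet (Δ : BalancedComplex d) {σ : Finset ℕ} (hσ : σ ∈ Δ.faces) :
    ∃ G ∈ Δ.toSComplex.facets, σ ⊆ G := by
  classical
  obtain ⟨G, hG, hmax⟩ := (Δ.faces.filter (fun τ => σ ⊆ τ)).exists_max_image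
    Finset.card ⟨σ, by simp [hσ]⟩
  rw [Finset.mem_filter] at hG
  refine ⟨G, ?_, hG.2⟩
  rw [SComplex.facets, Finset.mem_filter]
  refine ⟨hG.1, fun τ hτ hGτ => ?_⟩
  have hτ' : τ ∈ Δ.faces.filter (fun τ => σ ⊆ τ) :=
    Finset.mem_filter.2 ⟨hτ, hG.2.trans hGτ⟩
  exact Finset.eq_of_subset_of_card_le hGτ (hmax τ hτ')

lemma facet_mem_faces {Δ : SComplex} {G : Finset ℕ} (hG : G ∈ Δ.facets) : G ∈ Δ.faces :=
  (Finset.mem_filter.1 hG).1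

lemma facet_iff (Δ : BalancedComplex d) (hpure : Δ.toSComplex.Pure d) {G : Finset ℕ} :
    G ∈ Δ.toSComplex.facets ↔ G ∈ Δ.faces ∧ G.card = d + 1 := by
  constructor
  · intro h; exact ⟨facet_mem_faces h, hpure G h⟩
  · rintro ⟨hf, hc⟩
    obtain ⟨τ, hτ, hsub⟩ := exists_facet Δ hf
    have hcτ := hpure τ hτ
    have : G = τ := Finset.eq_of_subset_of_card_le hsub (by omega)
    exact this ▸ hτ

lemma image_facet (Δ : BalancedComplex d) (hpure : Δ.toSComplex.Pure d) {G : Finset ℕ}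
    (hG : G ∈ Δ.toSComplex.facets) : G.image Δ.κ = Finset.univ := by
  apply Finset.eq_univ_of_card
  rw [card_image_face Δ (facet_mem_faces hG), hpure G hG, Fintype.card_fin]

lemma kappa_not_mem (Δ : BalancedComplex d) {τ : Finset ℕ} {v : ℕ} (hv : v ∉ τ)
    (hins : insert v τ ∈ Δ.faces) : Δ.κ v ∉ τ.image Δ.κ := by
  intro h
  obtain ⟨u, hu, huv⟩ := Finset.mem_image.1 h
  have := Δ.proper _ hins u (Finset.mem_insert_of_mem hu) v (Finset.mem_insert_self v τ) huv
  exact hv (this ▸ hu)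

/-- Every `d`-card face has exactly two one-vertex extensions to a face. -/
lemma ext_pair (Δ : BalancedComplex d) (hpure : Δ.toSComplex.Pure d)
    (hridge : ∀ σ ∈ Δ.faces, σ.card = d →
      (Δ.toSComplex.facets.filter fun τ => σ ⊆ τ).card = 2)
    {τ : Finset ℕ} (hτ : τ ∈ Δ.faces) (hcard : τ.card = d) :
    ∃ v1 v2, v1 ≠ v2 ∧ v1 ∉ τ ∧ v2 ∉ τ ∧ insert v1 τ ∈ Δ.faces ∧ insert v2 τ ∈ Δ.faces ∧
      ∀ v, v ∉ τ → insert v τ ∈ Δ.faces → v = v1 ∨ v = v2 := by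
  classical
  have h2 := hridge τ hτ hcard
  obtain ⟨G1, G2, hG12, hset⟩ := Finset.card_eq_two.1 h2
  have hG1 : G1 ∈ Δ.toSComplex.facets ∧ τ ⊆ G1 := by
    have : G1 ∈ Δ.toSComplex.facets.filter (fun τ' => τ ⊆ τ') := by rw [hset]; simp
    rw [Finset.mem_filter] at this; exact this
  have hG2 : G2 ∈ Δ.toSComplex.facets ∧ τ ⊆ G2 := by
    have : G2 ∈ Δ.toSComplex.facets.filter (fun τ' => τ ⊆ τ') := by rw [hset]; simp
    rw [Finset.mem_filter] at this; exact this
  have hc1 : (G1 \ τ).card = 1 := by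
    rw [Finset.card_sdiff_of_subset hG1.2, hpure G1 hG1.1, hcard]; omega
  have hc2 : (G2 \ τ).card = 1 := by
    rw [Finset.card_sdiff_of_subset hG2.2, hpure G2 hG2.1, hcard]; omega
  obtain ⟨v1, hv1⟩ := Finset.card_eq_one.1 hc1
  obtain ⟨v2, hv2⟩ := Finset.card_eq_one.1 hc2
  have hG1eq : insert v1 τ = G1 := by
    rw [Finset.insert_eq, Finset.union_comm, ← hv1, Finset.union_sdiff_of_subset hG1.2]
  have hG2eq : insert v2 τ = G2 := by
    rw [Finset.insert_eq, Finset.union_comm, ← hv2, Finset.union_sdiff_of_subset hG2.2]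
  have hv1τ : v1 ∉ τ := by
    have : v1 ∈ G1 \ τ := hv1 ▸ Finset.mem_singleton_self v1
    exact (Finset.mem_sdiff.1 this).2
  have hv2τ : v2 ∉ τ := by
    have : v2 ∈ G2 \ τ := hv2 ▸ Finset.mem_singleton_self v2
    exact (Finset.mem_sdiff.1 this).2
  refine ⟨v1, v2, ?_, hv1τ, hv2τ, hG1eq ▸ facet_mem_faces hG1.1,
    hG2eq ▸ facet_mem_faces hG2.1, ?_⟩
  · intro h; exact hG12 (by rw [← hG1eq, ← hG2eq, h])
  · intro v hvτ hvf
    have hcard' : (insert v τ).card = d + 1 := by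
      rw [Finset.card_insert_of_notMem hvτ, hcard]
    have hfacet : insert v τ ∈ Δ.toSComplex.facets := (facet_iff Δ hpure).2 ⟨hvf, hcard'⟩
    have : insert v τ ∈ Δ.toSComplex.facets.filter (fun τ' => τ ⊆ τ') :=
      Finset.mem_filter.2 ⟨hfacet, Finset.subset_insert v τ⟩
    rw [hset, Finset.mem_insert, Finset.mem_singleton] at this
    rcases this with h | h
    · left
      have : v ∈ insert v1 τ := by rw [hG1eq, ← h]; exact Finset.mem_insert_self v τ
      rcases Finset.mem_insert.1 this with h' | h'
      · exact h'
      · exact absurd h' hvτ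
    · right
      have : v ∈ insert v2 τ := by rw [hG2eq, ← h]; exact Finset.mem_insert_self v τ
      rcases Finset.mem_insert.1 this with h' | h'
      · exact h'
      · exact absurd h' hvτ

lemma image_filter_not (Δ : BalancedComplex d) {σ : Finset ℕ} (S : Finset (Fin (d + 1))) :
    (σ.filter (fun v => Δ.κ v ∉ S)).image Δ.κ = σ.image Δ.κ \ S := by
  ext c
  simp only [Finset.mem_image, Finset.mem_filter, Finset.mem_sdiff]
  constructor
  · rintro ⟨v, ⟨hv, hvS⟩, rfl⟩; exact ⟨⟨v, hv, rfl⟩, hvS⟩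
  · rintro ⟨⟨v, hv, rfl⟩, hcS⟩; exact ⟨v, ⟨hv, hcS⟩, rfl⟩

/-- The predicate: `F` is a face of card `d-1` whose color set is exactly `[d] \ S`. -/
def IsF (Δ : BalancedComplex d) (S : Finset (Fin (d + 1))) (F : Finset ℕ) : Prop :=
  F ∈ Δ.faces ∧ F.image Δ.κ = Finset.univ \ S

lemma IsF.card {Δ : BalancedComplex d} {S : Finset (Fin (d + 1))} (hS : S.card = 2)
    {F : Finset ℕ} (hF : IsF Δ S F) : F.card = d - 1 := by
  have h1 := card_image_face Δ hF.1
  rw [hF.2, Finset.card_sdiff_of_subset (Finset.subset_univ S), Finset.card_univ, Fintype.card_fin, hS]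
    at h1
  omega

lemma core_spec (Δ : BalancedComplex d) (hpure : Δ.toSComplex.Pure d)
    {S : Finset (Fin (d + 1))} {G : Finset ℕ} (hG : G ∈ Δ.toSComplex.facets) :
    IsF Δ S (G.filter (fun v => Δ.κ v ∉ S)) := by
  refine ⟨Δ.down_closed G (facet_mem_faces hG) _ (Finset.filter_subset _ _), ?_⟩
  rw [image_filter_not, image_facet Δ hpure hG]

lemma mem_restrict {Δ : BalancedComplex d} {T : Finset (Fin (d + 1))} {σ : Finset ℕ} :
    σ ∈ (Δ.restrict T).faces ↔ σ ∈ Δ.faces ∧ σ.image Δ.κ ⊆ T := Finset.mem_filter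

lemma three_le_deg (Γ : SComplex) {ρ : Finset ℕ} {a b c : ℕ}
    (hab : a ≠ b) (hac : a ≠ c) (hbc : b ≠ c)
    (ha : a ∉ ρ) (hb : b ∉ ρ) (hc : c ∉ ρ)
    (hA : insert a ρ ∈ Γ.faces) (hB : insert b ρ ∈ Γ.faces) (hC : insert c ρ ∈ Γ.faces) :
    3 ≤ Γ.deg ρ := by
  classical
  have key : ∀ x : ℕ, x ∉ ρ → insert x ρ ∈ Γ.faces →
      ({x} : Finset ℕ) ∈ ((Γ.lk ρ).faces.filter fun σ => σ.card = 1) := by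
    intro x hx hxρ
    rw [Finset.mem_filter]
    refine ⟨?_, Finset.card_singleton x⟩
    show {x} ∈ Γ.faces.filter _
    rw [Finset.mem_filter]
    refine ⟨Γ.down_closed _ hxρ _ (by simp), ?_, ?_⟩
    · exact Finset.singleton_inter_of_notMem hx
    · rwa [← Finset.insert_eq]
  have hsub : ({{a}, {b}, {c}} : Finset (Finset ℕ)) ⊆
      (Γ.lk ρ).faces.filter fun σ => σ.card = 1 := by
    intro s hs
    simp only [Finset.mem_insert, Finset.mem_singleton] at hs
    rcases hs with rfl | rfl | rfl
    exacts [key a ha hA, key b hb hB, key c hc hC]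
  have h3 : ({{a}, {b}, {c}} : Finset (Finset ℕ)).card = 3 := by
    rw [Finset.card_insert_of_notMem (by simp [hab, hac]),
      Finset.card_insert_of_notMem (by simp [hbc]), Finset.card_singleton]
  calc (3 : ℕ) = ({{a}, {b}, {c}} : Finset (Finset ℕ)).card := h3.symm
    _ ≤ _ := Finset.card_le_card hsub

end S15

namespace S15

variable {d : ℕ}

lemma swap_lemma (Δ : BalancedComplex d) (hpure : Δ.toSComplex.Pure d)
    (hridge : ∀ σ ∈ Δ.faces, σ.card = d →
      (Δ.toSComplex.facets.filter fun τ => σ ⊆ τ).card = 2)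
    {S : Finset (Fin (d + 1))}
    (hdeg : ∀ σ ∈ (Δ.restrict (Finset.univ \ S)).faces, σ.card = d - 2 →
      (Δ.restrict (Finset.univ \ S)).deg σ < 3)
    {ρ : Finset ℕ} {a b : ℕ}
    (hρ : ρ ∈ (Δ.restrict (Finset.univ \ S)).faces) (hρc : ρ.card = d - 2)
    (ha : a ∉ ρ) (hb : b ∉ ρ) (hab : a ≠ b)
    (hA : insert a ρ ∈ (Δ.restrict (Finset.univ \ S)).faces)
    (hB : insert b ρ ∈ (Δ.restrict (Finset.univ \ S)).faces)
    {μ : Finset ℕ} (hμ : μ ∈ Δ.faces) (hμc : μ.card = d) (hρμ : ρ ⊆ μ)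
    (hSμ : S ⊆ μ.image Δ.κ) (haμ : a ∉ μ) (haf : insert a μ ∈ Δ.faces) :
    insert b μ ∈ Δ.faces := by
  classical
  by_cases hbμ : b ∈ μ
  · rwa [Finset.insert_eq_self.2 hbμ]
  obtain ⟨v1, v2, h12, hv1, hv2, hf1, hf2, huniq⟩ := ext_pair Δ hpure hridge hμ hμc
  have key : ∀ c : ℕ, c ∉ μ → insert c μ ∈ Δ.faces → c ≠ a → insert b μ ∈ Δ.faces := by
    intro c hcμ hcf hca
    by_cases hcb : c = b
    · exact hcb ▸ hcf
    · exfalso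
      have hκc : Δ.κ c ∉ μ.image Δ.κ := kappa_not_mem Δ hcμ hcf
      have hκcS : Δ.κ c ∉ S := fun h => hκc (hSμ h)
      have hcρ : c ∉ ρ := fun h => hcμ (hρμ h)
      have hC : insert c ρ ∈ (Δ.restrict (Finset.univ \ S)).faces := by
        rw [mem_restrict]
        refine ⟨Δ.down_closed _ hcf _ (Finset.insert_subset_insert c hρμ), ?_⟩
        rw [Finset.image_insert]
        exact Finset.insert_subset (Finset.mem_sdiff.2 ⟨Finset.mem_univ _, hκcS⟩)
          (mem_restrict.1 hρ).2
      have h3le := three_le_deg (Δ.restrict (Finset.univ \ S)) hab (Ne.symm hca)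
        (Ne.symm hcb) ha hb hcρ hA hB hC
      have h3 := hdeg ρ hρ hρc
      omega
  rcases huniq a haμ haf with rfl | rfl
  · exact key v2 hv2 hf2 (Ne.symm h12)
  · exact key v1 hv1 hf1 h12

lemma close2 (Δ : BalancedComplex d) (hd : 3 ≤ d) (hpure : Δ.toSComplex.Pure d)
    (hridge : ∀ σ ∈ Δ.faces, σ.card = d →
      (Δ.toSComplex.facets.filter fun τ => σ ⊆ τ).card = 2)
    {S : Finset (Fin (d + 1))} (hS : S.card = 2)
    (hdeg : ∀ σ ∈ (Δ.restrict (Finset.univ \ S)).faces, σ.card = d - 2 →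
      (Δ.restrict (Finset.univ \ S)).deg σ < 3)
    {x F F' : Finset ℕ} (hx : x ∈ Δ.faces) (hxim : x.image Δ.κ = S)
    (hF : IsF Δ S F) (hF' : IsF Δ S F') (hcap : (F ∩ F').card = d - 2)
    (hxF : x ∪ F ∈ Δ.faces) : x ∪ F' ∈ Δ.faces := by
  classical
  have hρf : F ∩ F' ∈ Δ.faces := Δ.down_closed F hF.1 _ Finset.inter_subset_left
  have hρim : (F ∩ F').image Δ.κ ⊆ Finset.univ \ S := by
    rw [← hF.2]; exact Finset.image_subset_image Finset.inter_subset_left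
  have hρ : F ∩ F' ∈ (Δ.restrict (Finset.univ \ S)).faces := mem_restrict.2 ⟨hρf, hρim⟩
  have hFc := hF.card hS
  have hF'c := hF'.card hS
  have hsd1 : (F \ (F ∩ F')).card = 1 := by
    rw [Finset.card_sdiff_of_subset Finset.inter_subset_left, hFc, hcap]; omega
  have hsd2 : (F' \ (F ∩ F')).card = 1 := by
    rw [Finset.card_sdiff_of_subset Finset.inter_subset_right, hF'c, hcap]; omega
  obtain ⟨a, hadef⟩ := Finset.card_eq_one.1 hsd1
  obtain ⟨b, hbdef⟩ := Finset.card_eq_one.1 hsd2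
  have haF : a ∈ F ∧ a ∉ F ∩ F' :=
    Finset.mem_sdiff.1 (hadef ▸ Finset.mem_singleton_self a)
  have hbF : b ∈ F' ∧ b ∉ F ∩ F' :=
    Finset.mem_sdiff.1 (hbdef ▸ Finset.mem_singleton_self b)
  have hFeq : insert a (F ∩ F') = F := by
    rw [Finset.insert_eq, Finset.union_comm, ← hadef,
      Finset.union_sdiff_of_subset Finset.inter_subset_left]
  have hF'eq : insert b (F ∩ F') = F' := by
    rw [Finset.insert_eq, Finset.union_comm, ← hbdef,
      Finset.union_sdiff_of_subset Finset.inter_subset_right]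
  have hab : a ≠ b := by
    intro h
    exact haF.2 (Finset.mem_inter.2 ⟨haF.1, h ▸ hbF.1⟩)
  have hA : insert a (F ∩ F') ∈ (Δ.restrict (Finset.univ \ S)).faces := by
    rw [hFeq, mem_restrict]
    exact ⟨hF.1, by rw [hF.2]⟩
  have hB : insert b (F ∩ F') ∈ (Δ.restrict (Finset.univ \ S)).faces := by
    rw [hF'eq, mem_restrict]
    exact ⟨hF'.1, by rw [hF'.2]⟩
  have hdisj : Disjoint x (F ∩ F') := by
    rw [Finset.disjoint_left]
    intro v hvx hvρ
    have h1 : Δ.κ v ∈ S := hxim ▸ Finset.mem_image_of_mem Δ.κ hvx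
    have h2 : Δ.κ v ∈ Finset.univ \ S := hρim (Finset.mem_image_of_mem Δ.κ hvρ)
    exact (Finset.mem_sdiff.1 h2).2 h1
  have hxc : x.card = 2 := by
    have h := card_image_face Δ hx; rw [hxim, hS] at h; omega
  have hμf : x ∪ (F ∩ F') ∈ Δ.faces :=
    Δ.down_closed _ hxF _ (Finset.union_subset_union_right Finset.inter_subset_left)
  have hμc : (x ∪ (F ∩ F')).card = d := by
    rw [Finset.card_union_of_disjoint hdisj, hxc, hcap]; omega
  have hSμ : S ⊆ (x ∪ (F ∩ F')).image Δ.κ := by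
    rw [← hxim]
    exact Finset.image_subset_image Finset.subset_union_left
  have haS : Δ.κ a ∉ S := by
    have h : Δ.κ a ∈ Finset.univ \ S := hF.2 ▸ Finset.mem_image_of_mem Δ.κ haF.1
    exact (Finset.mem_sdiff.1 h).2
  have hax : a ∉ x := fun h => haS (hxim ▸ Finset.mem_image_of_mem Δ.κ h)
  have haμ : a ∉ x ∪ (F ∩ F') := by
    rw [Finset.mem_union]; rintro (h | h)
    exacts [hax h, haF.2 h]
  have hins : insert a (x ∪ (F ∩ F')) = x ∪ F := by
    rw [← Finset.union_insert, hFeq]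
  have hbf := swap_lemma Δ hpure hridge hdeg hρ hcap haF.2 hbF.2 hab hA hB hμf hμc
    Finset.subset_union_right hSμ haμ (by rw [hins]; exact hxF)
  have hfin : x ∪ F' = insert b (x ∪ (F ∩ F')) := by
    rw [← Finset.union_insert, hF'eq]
  rw [hfin]; exact hbf

lemma close1 (Δ : BalancedComplex d) (hd : 3 ≤ d) (hpure : Δ.toSComplex.Pure d)
    (hridge : ∀ σ ∈ Δ.faces, σ.card = d →
      (Δ.toSComplex.facets.filter fun τ => σ ⊆ τ).card = 2)
    {S : Finset (Fin (d + 1))} (hS : S.card = 2)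
    (hdeg : ∀ σ ∈ (Δ.restrict (Finset.univ \ S)).faces, σ.card = d - 2 →
      (Δ.restrict (Finset.univ \ S)).deg σ < 3)
    {w : ℕ} {F F' : Finset ℕ} (hκw : Δ.κ w ∈ S)
    (hF : IsF Δ S F) (hF' : IsF Δ S F') (hcap : (F ∩ F').card = d - 2)
    (hwF : insert w F ∈ Δ.faces) : insert w F' ∈ Δ.faces := by
  classical
  have hwFmem : w ∉ F := by
    intro h
    have h2 : Δ.κ w ∈ Finset.univ \ S := hF.2 ▸ Finset.mem_image_of_mem Δ.κ h
    exact (Finset.mem_sdiff.1 h2).2 hκw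
  have hμc : (insert w F).card = d := by
    rw [Finset.card_insert_of_notMem hwFmem, hF.card hS]; omega
  obtain ⟨v1, v2, h12, hv1, hv2, hf1, hf2, _⟩ := ext_pair Δ hpure hridge hwF hμc
  have himμ : (insert w F).image Δ.κ = insert (Δ.κ w) (Finset.univ \ S) := by
    rw [Finset.image_insert, hF.2]
  have hκv1 : Δ.κ v1 ∉ insert (Δ.κ w) (Finset.univ \ S) := by
    rw [← himμ]; exact kappa_not_mem Δ hv1 hf1
  have hκv1S : Δ.κ v1 ∈ S := by
    by_contra h
    exact hκv1 (Finset.mem_insert_of_mem (Finset.mem_sdiff.2 ⟨Finset.mem_univ _, h⟩))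
  have hκv1w : Δ.κ v1 ≠ Δ.κ w := fun h => hκv1 (h ▸ Finset.mem_insert_self _ _)
  have hxf : ({w, v1} : Finset ℕ) ∈ Δ.faces := by
    apply Δ.down_closed _ hf1
    intro z hz
    rcases Finset.mem_insert.1 hz with rfl | hz
    · exact Finset.mem_insert_of_mem (Finset.mem_insert_self _ _)
    · rw [Finset.mem_singleton] at hz
      exact hz ▸ Finset.mem_insert_self _ _
  have hxim : ({w, v1} : Finset ℕ).image Δ.κ = S := by
    have hsub : ({Δ.κ w, Δ.κ v1} : Finset (Fin (d + 1))) ⊆ S := by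
      intro z hz
      rcases Finset.mem_insert.1 hz with rfl | hz
      · exact hκw
      · rw [Finset.mem_singleton] at hz; exact hz ▸ hκv1S
    have hcard2 : ({Δ.κ w, Δ.κ v1} : Finset (Fin (d + 1))).card = 2 := by
      rw [Finset.card_insert_of_notMem (Finset.notMem_singleton.2 (Ne.symm hκv1w)),
        Finset.card_singleton]
    rw [Finset.image_insert, Finset.image_singleton]
    exact Finset.eq_of_subset_of_card_le hsub (by rw [hS, hcard2])
  have hxuF : ({w, v1} : Finset ℕ) ∪ F = insert v1 (insert w F) := by
    ext z
    simp only [Finset.mem_union, Finset.mem_insert, Finset.mem_singleton]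
    tauto
  have h2 := close2 Δ hd hpure hridge hS hdeg hxf hxim hF hF' hcap
    (by rw [hxuF]; exact hf1)
  apply Δ.down_closed _ h2
  intro z hz
  rcases Finset.mem_insert.1 hz with rfl | hz
  · exact Finset.mem_union_left _ (Finset.mem_insert_self _ _)
  · exact Finset.mem_union_right _ hz

lemma close_step (Δ : BalancedComplex d) (hd : 3 ≤ d) (hpure : Δ.toSComplex.Pure d)
    (hridge : ∀ σ ∈ Δ.faces, σ.card = d →
      (Δ.toSComplex.facets.filter fun τ => σ ⊆ τ).card = 2)
    {S : Finset (Fin (d + 1))} (hS : S.card = 2)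
    (hdeg : ∀ σ ∈ (Δ.restrict (Finset.univ \ S)).faces, σ.card = d - 2 →
      (Δ.restrict (Finset.univ \ S)).deg σ < 3)
    {x A B : Finset ℕ} (hx : x ∈ Δ.faces) (hxim : x.image Δ.κ ⊆ S)
    (hR : IsF Δ S A ∧ IsF Δ S B ∧ (A ∩ B).card = d - 2)
    (hxA : x ∪ A ∈ Δ.faces) : x ∪ B ∈ Δ.faces := by
  classical
  obtain ⟨hA, hB, hcap⟩ := hR
  have hxc : x.card ≤ 2 := by
    have h1 := card_image_face Δ hx
    have h2 := Finset.card_le_card hxim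
    have h3 := Finset.card_le_card (Finset.subset_univ S)
    omega
  rcases Nat.lt_or_ge x.card 1 with h0 | h1
  · have hx0 : x = ∅ := Finset.card_eq_zero.1 (by omega)
    rw [hx0, Finset.empty_union]
    exact hB.1
  rcases Nat.lt_or_ge x.card 2 with hlt | h2
  · obtain ⟨w, rfl⟩ := Finset.card_eq_one.1 (by omega : x.card = 1)
    have hκw : Δ.κ w ∈ S := hxim (by simp)
    have hA' : insert w A ∈ Δ.faces := by rw [Finset.insert_eq]; exact hxA
    have h := close1 Δ hd hpure hridge hS hdeg hκw hA hB hcap hA'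
    rw [← Finset.insert_eq]
    exact h
  · have hxim2 : x.image Δ.κ = S := by
      apply Finset.eq_of_subset_of_card_le hxim
      rw [hS, card_image_face Δ hx]; omega
    exact close2 Δ hd hpure hridge hS hdeg hx hxim2 hA hB hcap hxA

end S15

namespace S15

variable {d : ℕ}

lemma conn (Δ : BalancedComplex d) (hpure : Δ.toSComplex.Pure d)
    (hstrong : ∀ σ ∈ Δ.toSComplex.facets, ∀ τ ∈ Δ.toSComplex.facets,
      Relation.ReflTransGen
        (fun α β => α ∈ Δ.toSComplex.facets ∧ β ∈ Δ.toSComplex.facets ∧ (α ∩ β).card = d) σ τ)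
    {S : Finset (Fin (d + 1))} (hS : S.card = 2)
    {F F' : Finset ℕ} (hF : IsF Δ S F) (hF' : IsF Δ S F') :
    Relation.ReflTransGen
      (fun A B => IsF Δ S A ∧ IsF Δ S B ∧ (A ∩ B).card = d - 2) F F' := by
  classical
  obtain ⟨G, hG, hFG⟩ := exists_facet Δ hF.1
  obtain ⟨G', hG', hFG'⟩ := exists_facet Δ hF'.1
  have hcor : ∀ {H K : Finset ℕ}, IsF Δ S H → H ⊆ K → K ∈ Δ.toSComplex.facets →
      K.filter (fun v => Δ.κ v ∉ S) = H := by
    intro H K hH hHK hK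
    have hsub : H ⊆ K.filter (fun v => Δ.κ v ∉ S) := by
      intro v hv
      rw [Finset.mem_filter]
      refine ⟨hHK hv, ?_⟩
      have h2 : Δ.κ v ∈ Finset.univ \ S := hH.2 ▸ Finset.mem_image_of_mem Δ.κ hv
      exact (Finset.mem_sdiff.1 h2).2
    exact (Finset.eq_of_subset_of_card_le hsub
      (le_of_eq (by rw [(core_spec Δ hpure hK).card hS, hH.card hS]))).symm
  have step : ∀ {α β : Finset ℕ}, α ∈ Δ.toSComplex.facets → β ∈ Δ.toSComplex.facets →
      (α ∩ β).card = d →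
      α.filter (fun v => Δ.κ v ∉ S) = β.filter (fun v => Δ.κ v ∉ S) ∨
      (IsF Δ S (α.filter (fun v => Δ.κ v ∉ S)) ∧ IsF Δ S (β.filter (fun v => Δ.κ v ∉ S)) ∧
        ((α.filter (fun v => Δ.κ v ∉ S)) ∩ (β.filter (fun v => Δ.κ v ∉ S))).card = d - 2) := by
    intro α β hα hβ hcap
    have hνf : α ∩ β ∈ Δ.faces :=
      Δ.down_closed α (facet_mem_faces hα) _ Finset.inter_subset_left
    have hc1 : (α \ (α ∩ β)).card = 1 := by
      rw [Finset.card_sdiff_of_subset Finset.inter_subset_left, hpure α hα, hcap]; omega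
    have hc2 : (β \ (α ∩ β)).card = 1 := by
      rw [Finset.card_sdiff_of_subset Finset.inter_subset_right, hpure β hβ, hcap]; omega
    obtain ⟨v, hvdef⟩ := Finset.card_eq_one.1 hc1
    obtain ⟨v', hv'def⟩ := Finset.card_eq_one.1 hc2
    have hαeq : insert v (α ∩ β) = α := by
      rw [Finset.insert_eq, Finset.union_comm, ← hvdef,
        Finset.union_sdiff_of_subset Finset.inter_subset_left]
    have hβeq : insert v' (α ∩ β) = β := by
      rw [Finset.insert_eq, Finset.union_comm, ← hv'def,
        Finset.union_sdiff_of_subset Finset.inter_subset_right]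
    have hvν : v ∉ α ∩ β := (Finset.mem_sdiff.1 (hvdef ▸ Finset.mem_singleton_self v)).2
    have hv'ν : v' ∉ α ∩ β := (Finset.mem_sdiff.1 (hv'def ▸ Finset.mem_singleton_self v')).2
    have hκv : Δ.κ v ∉ (α ∩ β).image Δ.κ :=
      kappa_not_mem Δ hvν (by rw [hαeq]; exact facet_mem_faces hα)
    have hκv' : Δ.κ v' ∉ (α ∩ β).image Δ.κ :=
      kappa_not_mem Δ hv'ν (by rw [hβeq]; exact facet_mem_faces hβ)
    have himν : (α ∩ β).image Δ.κ = Finset.univ \ {Δ.κ v} := by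
      have h1 : insert (Δ.κ v) ((α ∩ β).image Δ.κ) = Finset.univ := by
        rw [← Finset.image_insert, hαeq, image_facet Δ hpure hα]
      ext c
      simp only [Finset.mem_sdiff, Finset.mem_univ, true_and, Finset.mem_singleton]
      constructor
      · intro hcν hc; exact hκv (hc ▸ hcν)
      · intro hc
        have h2 : c ∈ insert (Δ.κ v) ((α ∩ β).image Δ.κ) := by
          rw [h1]; exact Finset.mem_univ c
        exact (Finset.mem_insert.1 h2).resolve_left hc
    have hκvv' : Δ.κ v' = Δ.κ v := by
      by_contra hne
      exact hκv' (by
        rw [himν]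
        exact Finset.mem_sdiff.2 ⟨Finset.mem_univ _, Finset.notMem_singleton.2 hne⟩)
    by_cases hvS : Δ.κ v ∈ S
    · left
      have e1 : Finset.filter (fun t => Δ.κ t ∉ S) α =
          Finset.filter (fun t => Δ.κ t ∉ S) (α ∩ β) := by
        conv_lhs => rw [← hαeq]
        rw [Finset.filter_insert, if_neg (not_not_intro hvS)]
      have e2 : Finset.filter (fun t => Δ.κ t ∉ S) β =
          Finset.filter (fun t => Δ.κ t ∉ S) (α ∩ β) := by
        conv_lhs => rw [← hβeq]
        rw [Finset.filter_insert, if_neg (by rw [hκvv']; exact not_not_intro hvS)]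
      rw [e1, e2]
    · right
      refine ⟨core_spec Δ hpure hα, core_spec Δ hpure hβ, ?_⟩
      rw [← Finset.filter_inter_distrib]
      have hf : (α ∩ β).filter (fun v => Δ.κ v ∉ S) ∈ Δ.faces :=
        Δ.down_closed _ hνf _ (Finset.filter_subset _ _)
      have h1 := card_image_face Δ hf
      rw [image_filter_not, himν] at h1
      have hSsub : S ⊆ Finset.univ \ {Δ.κ v} := by
        intro s hs
        exact Finset.mem_sdiff.2 ⟨Finset.mem_univ _,
          Finset.notMem_singleton.2 (fun h => hvS (h ▸ hs))⟩
      rw [Finset.card_sdiff_of_subset hSsub, Finset.card_sdiff_of_subset (Finset.subset_univ _),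
        Finset.card_univ, Fintype.card_fin, Finset.card_singleton, hS] at h1
      omega
  have lift : ∀ {α β : Finset ℕ},
      Relation.ReflTransGen
        (fun α β => α ∈ Δ.toSComplex.facets ∧ β ∈ Δ.toSComplex.facets ∧ (α ∩ β).card = d)
        α β →
      Relation.ReflTransGen
        (fun A B => IsF Δ S A ∧ IsF Δ S B ∧ (A ∩ B).card = d - 2)
        (α.filter (fun v => Δ.κ v ∉ S)) (β.filter (fun v => Δ.κ v ∉ S)) := by
    intro α β h
    induction h with
    | refl => exact Relation.ReflTransGen.refl
    | tail _hrtg hstep0 ih =>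
      rcases step hstep0.1 hstep0.2.1 hstep0.2.2 with heq | hr
      · rw [← heq]; exact ih
      · exact ih.tail hr
  have h := lift (hstrong G hG G' hG')
  rw [hcor hF hFG hG, hcor hF' hFG' hG'] at h
  exact h

lemma main_join (Δ : BalancedComplex d) (hd : 3 ≤ d) (hpure : Δ.toSComplex.Pure d)
    (hridge : ∀ σ ∈ Δ.faces, σ.card = d →
      (Δ.toSComplex.facets.filter fun τ => σ ⊆ τ).card = 2)
    (hstrong : ∀ σ ∈ Δ.toSComplex.facets, ∀ τ ∈ Δ.toSComplex.facets,
      Relation.ReflTransGen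
        (fun α β => α ∈ Δ.toSComplex.facets ∧ β ∈ Δ.toSComplex.facets ∧ (α ∩ β).card = d) σ τ)
    {S : Finset (Fin (d + 1))} (hS : S.card = 2)
    (hdeg : ∀ σ ∈ (Δ.restrict (Finset.univ \ S)).faces, σ.card = d - 2 →
      (Δ.restrict (Finset.univ \ S)).deg σ < 3)
    {x F : Finset ℕ} (hx : x ∈ Δ.faces) (hxim : x.image Δ.κ ⊆ S) (hF : IsF Δ S F) :
    x ∪ F ∈ Δ.faces := by
  classical
  obtain ⟨G, hG, hxG⟩ := exists_facet Δ hx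
  have hF0 : IsF Δ S (G.filter (fun v => Δ.κ v ∉ S)) := core_spec Δ hpure hG
  have hbase : x ∪ G.filter (fun v => Δ.κ v ∉ S) ∈ Δ.faces :=
    Δ.down_closed G (facet_mem_faces hG) _
      (Finset.union_subset hxG (Finset.filter_subset _ _))
  have hchain := conn Δ hpure hstrong hS hF0 hF
  clear hF hF0
  induction hchain with
  | refl => exact hbase
  | tail _hrtg hstep0 ih =>
    exact close_step Δ hd hpure hridge hS hdeg hx hxim hstep0 ih

lemma nbr (Δ : BalancedComplex d) (hd : 3 ≤ d) (hpure : Δ.toSComplex.Pure d)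
    (hridge : ∀ σ ∈ Δ.faces, σ.card = d →
      (Δ.toSComplex.facets.filter fun τ => σ ⊆ τ).card = 2)
    (hstrong : ∀ σ ∈ Δ.toSComplex.facets, ∀ τ ∈ Δ.toSComplex.facets,
      Relation.ReflTransGen
        (fun α β => α ∈ Δ.toSComplex.facets ∧ β ∈ Δ.toSComplex.facets ∧ (α ∩ β).card = d) σ τ)
    {S : Finset (Fin (d + 1))} (hS : S.card = 2)
    (hdeg : ∀ σ ∈ (Δ.restrict (Finset.univ \ S)).faces, σ.card = d - 2 →
      (Δ.restrict (Finset.univ \ S)).deg σ < 3)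
    {w : ℕ} {F : Finset ℕ} (hw : ({w} : Finset ℕ) ∈ Δ.faces) (hκw : Δ.κ w ∈ S)
    (hF : IsF Δ S F) :
    ∃ x1 x2 : ℕ, x1 ≠ x2 ∧ Δ.κ x1 ∈ S ∧ Δ.κ x2 ∈ S ∧ Δ.κ x1 ≠ Δ.κ w ∧ Δ.κ x2 ≠ Δ.κ w ∧
      (∀ v : ℕ, (insert v (insert w F) ∈ Δ.faces ∧ Δ.κ v ∈ S ∧ v ≠ w) ↔
        (v = x1 ∨ v = x2)) := by
  classical
  have hwF : w ∉ F := fun h =>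
    (Finset.mem_sdiff.1 (hF.2 ▸ Finset.mem_image_of_mem Δ.κ h)).2 hκw
  have hμf : insert w F ∈ Δ.faces := by
    have h := main_join Δ hd hpure hridge hstrong hS hdeg hw (by simp [hκw]) hF
    rwa [← Finset.insert_eq] at h
  have hμc : (insert w F).card = d := by
    rw [Finset.card_insert_of_notMem hwF, hF.card hS]; omega
  obtain ⟨v1, v2, h12, hv1, hv2, hf1, hf2, huniq⟩ := ext_pair Δ hpure hridge hμf hμc
  have himμ : (insert w F).image Δ.κ = insert (Δ.κ w) (Finset.univ \ S) := by
    rw [Finset.image_insert, hF.2]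
  have props : ∀ v : ℕ, v ∉ insert w F → insert v (insert w F) ∈ Δ.faces →
      Δ.κ v ∈ S ∧ Δ.κ v ≠ Δ.κ w ∧ v ≠ w := by
    intro v hvμ hvf
    have h := kappa_not_mem Δ hvμ hvf
    rw [himμ] at h
    have h1 : Δ.κ v ≠ Δ.κ w := fun he => h (he ▸ Finset.mem_insert_self _ _)
    have h2 : Δ.κ v ∈ S := by
      by_contra hne
      exact h (Finset.mem_insert_of_mem (Finset.mem_sdiff.2 ⟨Finset.mem_univ _, hne⟩))
    exact ⟨h2, h1, fun he => h1 (he ▸ rfl)⟩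
  obtain ⟨hS1, hne1, hw1⟩ := props v1 hv1 hf1
  obtain ⟨hS2, hne2, hw2⟩ := props v2 hv2 hf2
  refine ⟨v1, v2, h12, hS1, hS2, hne1, hne2, fun v => ⟨?_, ?_⟩⟩
  · rintro ⟨hvf, hvS, hvw⟩
    have hvμ : v ∉ insert w F := by
      rw [Finset.mem_insert]
      rintro (rfl | hvF)
      · exact hvw rfl
      · exact (Finset.mem_sdiff.1 (hF.2 ▸ Finset.mem_image_of_mem Δ.κ hvF)).2 hvS
    exact huniq v hvμ hvf
  · rintro (rfl | rfl)
    · exact ⟨hf1, hS1, hw1⟩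
    · exact ⟨hf2, hS2, hw2⟩

end S15

/-- Let `Δ` be a balanced normal `d`-pseudomanifold (`d ≥ 3`) and
`S ⊆ [d]` a two-element subset with `Γ_S(Δ) ≥ 1`.  Then there is a
`(d-3)`-dimensional face `σ` of `Δ_{[d]∖S}` with `deg(σ, Δ_{[d]∖S}) ≥ 3`. -/
theorem statement15 (d : ℕ) (hd : 3 ≤ d) (Δ : BalancedComplex d)
    (hΔ : Δ.toSComplex.IsNormalPseudomanifold d)
    (S : Finset (Fin (d + 1))) (hS : S.card = 2)
    (hΓ : 1 ≤ Δ.Gamma S) :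
    ∃ σ ∈ (Δ.restrict (Finset.univ \ S)).faces,
      σ.card = d - 2 ∧ 3 ≤ (Δ.restrict (Finset.univ \ S)).deg σ := by
  classical
  obtain ⟨hne, hpure, hridge, hstrong, _hlk⟩ := hΔ
  by_contra hcon
  push_neg at hcon
  have hdeg : ∀ σ ∈ (Δ.restrict (Finset.univ \ S)).faces, σ.card = d - 2 →
      (Δ.restrict (Finset.univ \ S)).deg σ < 3 := hcon
  obtain ⟨p, q, hpq, hSpq⟩ := Finset.card_eq_two.1 hS
  -- a reference face with colors exactly `univ \ S`
  obtain ⟨σ₀, hσ₀⟩ := hne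
  obtain ⟨G₀, hG₀, -⟩ := S15.exists_facet Δ hσ₀
  set F : Finset ℕ := G₀.filter (fun v => Δ.κ v ∉ S) with hFdef
  have hF : S15.IsF Δ S F := S15.core_spec Δ hpure hG₀
  set Vp := Δ.faces.filter (fun σ => σ.image Δ.κ = ({p} : Finset (Fin (d + 1)))) with hVp
  set Vq := Δ.faces.filter (fun σ => σ.image Δ.κ = ({q} : Finset (Fin (d + 1)))) with hVq
  set E := Δ.faces.filter (fun σ => σ.image Δ.κ = S) with hE
  set P := (Vp ×ˢ Vq).filter (fun z => z.1 ∪ z.2 ∪ F ∈ Δ.faces) with hP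
  have hsingle : ∀ {c : Fin (d + 1)} {σ : Finset ℕ}, σ ∈ Δ.faces →
      σ.image Δ.κ = {c} → ∃ u, σ = {u} ∧ Δ.κ u = c := by
    intro c σ hσf him
    have h1 := S15.card_image_face Δ hσf
    rw [him, Finset.card_singleton] at h1
    obtain ⟨u, rfl⟩ := Finset.card_eq_one.1 h1.symm
    refine ⟨u, rfl, ?_⟩
    have h2 : Δ.κ u ∈ ({c} : Finset (Fin (d + 1))) :=
      him ▸ Finset.mem_image_of_mem Δ.κ (Finset.mem_singleton_self u)
    exact Finset.mem_singleton.1 h2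
  have hpS : p ∈ S := by rw [hSpq]; exact Finset.mem_insert_self _ _
  have hqS : q ∈ S := by rw [hSpq]; exact Finset.mem_insert_of_mem (Finset.mem_singleton_self q)
  -- fibers of P over the first coordinate
  have hfibp : ∀ σp ∈ Vp, (P.filter (fun z => z.1 = σp)).card = 2 := by
    intro σp hσp
    rw [hVp, Finset.mem_filter] at hσp
    obtain ⟨w, rfl, hκw⟩ := hsingle hσp.1 hσp.2
    have hκwS : Δ.κ w ∈ S := by rw [hκw]; exact hpS
    obtain ⟨x1, x2, h12, hx1S, hx2S, hx1w, hx2w, hiff⟩ :=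
      S15.nbr Δ hd hpure hridge hstrong hS hdeg hσp.1 hκwS hF
    have hq1 : Δ.κ x1 = q := by
      rw [hSpq] at hx1S
      rcases Finset.mem_insert.1 hx1S with h | h
      · exact absurd h (by rw [hκw] at hx1w; exact hx1w)
      · exact Finset.mem_singleton.1 h
    have hq2 : Δ.κ x2 = q := by
      rw [hSpq] at hx2S
      rcases Finset.mem_insert.1 hx2S with h | h
      · exact absurd h (by rw [hκw] at hx2w; exact hx2w)
      · exact Finset.mem_singleton.1 h
    have hunioneq : ∀ v : ℕ, ({w} : Finset ℕ) ∪ {v} ∪ F = insert v (insert w F) := by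
      intro v
      ext t
      simp only [Finset.mem_union, Finset.mem_insert, Finset.mem_singleton]
      tauto
    have hmemQ : ∀ v : ℕ, Δ.κ v = q → insert v (insert w F) ∈ Δ.faces →
        ({v} : Finset ℕ) ∈ Vq := by
      intro v hκv hvf
      rw [hVq, Finset.mem_filter]
      refine ⟨Δ.down_closed _ hvf _
        (Finset.singleton_subset_iff.2 (Finset.mem_insert_self v _)), ?_⟩
      rw [Finset.image_singleton, hκv]
    have hset : P.filter (fun z => z.1 = ({w} : Finset ℕ)) =
        {(({w} : Finset ℕ), ({x1} : Finset ℕ)), (({w} : Finset ℕ), ({x2} : Finset ℕ))} := by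
      ext z
      obtain ⟨z1, z2⟩ := z
      rw [Finset.mem_filter, hP, Finset.mem_filter, Finset.mem_product]
      simp only [Finset.mem_insert, Finset.mem_singleton, Prod.mk.injEq]
      constructor
      · rintro ⟨⟨⟨hz1, hz2⟩, hzu⟩, hz1eq⟩
        rw [hVq, Finset.mem_filter] at hz2
        obtain ⟨v, rfl, hκv⟩ := hsingle hz2.1 hz2.2
        have hvf : insert v (insert w F) ∈ Δ.faces := by
          rw [← hunioneq v, ← hz1eq]; exact hzu
        have hvS : Δ.κ v ∈ S := by rw [hκv]; exact hqS
        have hvw : v ≠ w := by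
          intro h
          exact hpq (hκw.symm.trans (by rw [← h, hκv]))
        rcases (hiff v).1 ⟨hvf, hvS, hvw⟩ with rfl | rfl
        · exact Or.inl ⟨hz1eq, rfl⟩
        · exact Or.inr ⟨hz1eq, rfl⟩
      · have hwVp : ({w} : Finset ℕ) ∈ Vp := by
          rw [hVp, Finset.mem_filter]
          exact ⟨hσp.1, by rw [Finset.image_singleton, hκw]⟩
        rintro (⟨rfl, rfl⟩ | ⟨rfl, rfl⟩)
        · have hf1 : insert x1 (insert w F) ∈ Δ.faces :=
            ((hiff x1).2 (Or.inl rfl)).1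
          exact ⟨⟨⟨hwVp, hmemQ x1 hq1 hf1⟩, by rw [hunioneq x1]; exact hf1⟩, rfl⟩
        · have hf2 : insert x2 (insert w F) ∈ Δ.faces :=
            ((hiff x2).2 (Or.inr rfl)).1
          exact ⟨⟨⟨hwVp, hmemQ x2 hq2 hf2⟩, by rw [hunioneq x2]; exact hf2⟩, rfl⟩
    rw [hset]
    rw [Finset.card_insert_of_notMem (by simp [Prod.ext_iff, Finset.singleton_inj, h12]),
      Finset.card_singleton]
  -- fibers of P over the second coordinate
  have hfibq : ∀ σq ∈ Vq, (P.filter (fun z => z.2 = σq)).card = 2 := by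
    intro σq hσq
    rw [hVq, Finset.mem_filter] at hσq
    obtain ⟨w, rfl, hκw⟩ := hsingle hσq.1 hσq.2
    have hκwS : Δ.κ w ∈ S := by rw [hκw]; exact hqS
    obtain ⟨x1, x2, h12, hx1S, hx2S, hx1w, hx2w, hiff⟩ :=
      S15.nbr Δ hd hpure hridge hstrong hS hdeg hσq.1 hκwS hF
    have hq1 : Δ.κ x1 = p := by
      rw [hSpq] at hx1S
      rcases Finset.mem_insert.1 hx1S with h | h
      · exact h
      · exact absurd (Finset.mem_singleton.1 h) (by rw [hκw] at hx1w; exact hx1w)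
    have hq2 : Δ.κ x2 = p := by
      rw [hSpq] at hx2S
      rcases Finset.mem_insert.1 hx2S with h | h
      · exact h
      · exact absurd (Finset.mem_singleton.1 h) (by rw [hκw] at hx2w; exact hx2w)
    have hunioneq : ∀ v : ℕ, ({v} : Finset ℕ) ∪ {w} ∪ F = insert v (insert w F) := by
      intro v
      ext t
      simp only [Finset.mem_union, Finset.mem_insert, Finset.mem_singleton]
      tauto
    have hmemP : ∀ v : ℕ, Δ.κ v = p → insert v (insert w F) ∈ Δ.faces →
        ({v} : Finset ℕ) ∈ Vp := by
      intro v hκv hvf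
      rw [hVp, Finset.mem_filter]
      refine ⟨Δ.down_closed _ hvf _
        (Finset.singleton_subset_iff.2 (Finset.mem_insert_self v _)), ?_⟩
      rw [Finset.image_singleton, hκv]
    have hset : P.filter (fun z => z.2 = ({w} : Finset ℕ)) =
        {(({x1} : Finset ℕ), ({w} : Finset ℕ)), (({x2} : Finset ℕ), ({w} : Finset ℕ))} := by
      ext z
      obtain ⟨z1, z2⟩ := z
      rw [Finset.mem_filter, hP, Finset.mem_filter, Finset.mem_product]
      simp only [Finset.mem_insert, Finset.mem_singleton, Prod.mk.injEq]
      constructor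
      · rintro ⟨⟨⟨hz1, hz2⟩, hzu⟩, hz2eq⟩
        rw [hVp, Finset.mem_filter] at hz1
        obtain ⟨v, rfl, hκv⟩ := hsingle hz1.1 hz1.2
        have hvf : insert v (insert w F) ∈ Δ.faces := by
          rw [← hunioneq v, ← hz2eq]; exact hzu
        have hvS : Δ.κ v ∈ S := by rw [hκv]; exact hpS
        have hvw : v ≠ w := by
          intro h
          exact hpq (by rw [← hκv, h, hκw])
        rcases (hiff v).1 ⟨hvf, hvS, hvw⟩ with rfl | rfl
        · exact Or.inl ⟨rfl, hz2eq⟩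
        · exact Or.inr ⟨rfl, hz2eq⟩
      · have hwVq : ({w} : Finset ℕ) ∈ Vq := by
          rw [hVq, Finset.mem_filter]
          exact ⟨hσq.1, by rw [Finset.image_singleton, hκw]⟩
        rintro (⟨rfl, rfl⟩ | ⟨rfl, rfl⟩)
        · have hf1 : insert x1 (insert w F) ∈ Δ.faces :=
            ((hiff x1).2 (Or.inl rfl)).1
          exact ⟨⟨⟨hmemP x1 hq1 hf1, hwVq⟩, by rw [hunioneq x1]; exact hf1⟩, rfl⟩
        · have hf2 : insert x2 (insert w F) ∈ Δ.faces :=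
            ((hiff x2).2 (Or.inr rfl)).1
          exact ⟨⟨⟨hmemP x2 hq2 hf2, hwVq⟩, by rw [hunioneq x2]; exact hf2⟩, rfl⟩
    rw [hset]
    rw [Finset.card_insert_of_notMem (by simp [Prod.ext_iff, Finset.singleton_inj, h12]),
      Finset.card_singleton]
  -- |P| = 2 |Vp| and |P| = 2 |Vq|
  have hPp : P.card = 2 * Vp.card := by
    have hmapsto : ∀ z ∈ P, z.1 ∈ Vp := fun z hz =>
      (Finset.mem_product.1 (Finset.mem_filter.1 hz).1).1
    rw [Finset.card_eq_sum_card_fiberwise hmapsto, Finset.sum_congr rfl hfibp,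
      Finset.sum_const, smul_eq_mul, mul_comm]
  have hPq : P.card = 2 * Vq.card := by
    have hmapsto : ∀ z ∈ P, z.2 ∈ Vq := fun z hz =>
      (Finset.mem_product.1 (Finset.mem_filter.1 hz).1).2
    rw [Finset.card_eq_sum_card_fiberwise hmapsto, Finset.sum_congr rfl hfibq,
      Finset.sum_const, smul_eq_mul, mul_comm]
  -- |E| = |P|
  have hEP : E.card = P.card := by
    apply Finset.card_bij
      (fun e _ => ((e.filter (fun v => Δ.κ v = p), e.filter (fun v => Δ.κ v = q)) :
        Finset ℕ × Finset ℕ))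
    · intro e he
      rw [hE, Finset.mem_filter] at he
      obtain ⟨hef, heim⟩ := he
      have hp' : p ∈ e.image Δ.κ := by rw [heim]; exact hpS
      obtain ⟨u, hu, hκu⟩ := Finset.mem_image.1 hp'
      have hq' : q ∈ e.image Δ.κ := by rw [heim]; exact hqS
      obtain ⟨v, hv, hκv⟩ := Finset.mem_image.1 hq'
      have huv : u ≠ v := fun h => hpq (by rw [← hκu, h, hκv])
      have hecard : e.card = 2 := by
        have h := S15.card_image_face Δ hef; rw [heim, hS] at h; omega
      have heuv : e = {u, v} := by
        apply (Finset.eq_of_subset_of_card_le ?_ ?_).symm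
        · intro z hz
          rcases Finset.mem_insert.1 hz with rfl | hz
          · exact hu
          · rw [Finset.mem_singleton] at hz; exact hz ▸ hv
        · rw [hecard, Finset.card_insert_of_notMem (Finset.notMem_singleton.2 huv),
            Finset.card_singleton]
      have hfu : e.filter (fun z => Δ.κ z = p) = {u} := by
        ext z
        simp only [Finset.mem_filter, Finset.mem_singleton]
        constructor
        · rintro ⟨hz, hκz⟩
          rw [heuv] at hz
          rcases Finset.mem_insert.1 hz with rfl | hz
          · rfl
          · rw [Finset.mem_singleton] at hz; subst hz
            exact absurd (hκz.symm.trans hκv) hpq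
        · rintro rfl; exact ⟨hu, hκu⟩
      have hfv : e.filter (fun z => Δ.κ z = q) = {v} := by
        ext z
        simp only [Finset.mem_filter, Finset.mem_singleton]
        constructor
        · rintro ⟨hz, hκz⟩
          rw [heuv] at hz
          rcases Finset.mem_insert.1 hz with rfl | hz
          · exact absurd (hκz.symm.trans hκu) (Ne.symm hpq)
          · exact Finset.mem_singleton.1 hz
        · rintro rfl; exact ⟨hv, hκv⟩
      rw [hP, Finset.mem_filter, Finset.mem_product, hfu, hfv]
      have heF : e ∪ F ∈ Δ.faces :=
        S15.main_join Δ hd hpure hridge hstrong hS hdeg hef (by rw [heim]) hF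
      refine ⟨⟨?_, ?_⟩, ?_⟩
      · rw [hVp, Finset.mem_filter]
        refine ⟨Δ.down_closed _ hef _ (Finset.singleton_subset_iff.2 hu), ?_⟩
        rw [Finset.image_singleton, hκu]
      · rw [hVq, Finset.mem_filter]
        refine ⟨Δ.down_closed _ hef _ (Finset.singleton_subset_iff.2 hv), ?_⟩
        rw [Finset.image_singleton, hκv]
      · have hueq : ({u} : Finset ℕ) ∪ {v} ∪ F = e ∪ F := by
          rw [heuv]
          ext t
          simp only [Finset.mem_union, Finset.mem_insert, Finset.mem_singleton]
          try tauto
        rw [hueq]; exact heF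
    · intro e1 h1 e2 h2 heq
      rw [Prod.mk.injEq] at heq
      have hrec : ∀ e ∈ E, e = e.filter (fun v => Δ.κ v = p) ∪ e.filter (fun v => Δ.κ v = q) := by
        intro e he
        rw [hE, Finset.mem_filter] at he
        ext z
        simp only [Finset.mem_union, Finset.mem_filter]
        constructor
        · intro hz
          have hzS : Δ.κ z ∈ S := he.2 ▸ Finset.mem_image_of_mem _ hz
          rw [hSpq] at hzS
          rcases Finset.mem_insert.1 hzS with h | h
          · exact Or.inl ⟨hz, h⟩
          · exact Or.inr ⟨hz, Finset.mem_singleton.1 h⟩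
        · rintro (⟨hz, -⟩ | ⟨hz, -⟩) <;> exact hz
      rw [hrec e1 h1, hrec e2 h2, heq.1, heq.2]
    · intro z hz
      rw [hP, Finset.mem_filter, Finset.mem_product] at hz
      obtain ⟨⟨hz1, hz2⟩, hzu⟩ := hz
      rw [hVp, Finset.mem_filter] at hz1
      rw [hVq, Finset.mem_filter] at hz2
      obtain ⟨u, hz1e, hκu⟩ := hsingle hz1.1 hz1.2
      obtain ⟨v, hz2e, hκv⟩ := hsingle hz2.1 hz2.2
      have huv : u ≠ v := fun h => hpq (by rw [← hκu, h, hκv])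
      refine ⟨{u, v}, ?_, ?_⟩
      · rw [hE, Finset.mem_filter]
        constructor
        · apply Δ.down_closed _ hzu
          intro t ht
          rcases Finset.mem_insert.1 ht with ht1 | ht1
          · exact Finset.mem_union_left _ (Finset.mem_union_left _
              (by rw [ht1, hz1e]; exact Finset.mem_singleton_self u))
          · rw [Finset.mem_singleton] at ht1
            exact Finset.mem_union_left _ (Finset.mem_union_right _
              (by rw [ht1, hz2e]; exact Finset.mem_singleton_self v))
        · rw [Finset.image_insert, Finset.image_singleton, hκu, hκv, hSpq]
      · rw [Prod.ext_iff]
        constructor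
        · show ({u, v} : Finset ℕ).filter (fun t => Δ.κ t = p) = z.1
          rw [hz1e]
          ext t
          simp only [Finset.mem_filter, Finset.mem_insert, Finset.mem_singleton]
          constructor
          · rintro ⟨rfl | rfl, hκt⟩
            · rfl
            · exact absurd (hκv.symm.trans hκt) (Ne.symm hpq)
          · rintro rfl; exact ⟨Or.inl rfl, hκu⟩
        · show ({u, v} : Finset ℕ).filter (fun t => Δ.κ t = q) = z.2
          rw [hz2e]
          ext t
          simp only [Finset.mem_filter, Finset.mem_insert, Finset.mem_singleton]
          constructor
          · rintro ⟨rfl | rfl, hκt⟩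
            · exact absurd (hκu.symm.trans hκt) hpq
            · rfl
          · rintro rfl; exact ⟨Or.inr rfl, hκv⟩
  -- conclude
  have hfSE : Δ.fS S = E.card := rfl
  have hfSp : Δ.fS {p} = Vp.card := rfl
  have hfSq : Δ.fS {q} = Vq.card := rfl
  have hGam : Δ.Gamma S = (E.card : ℤ) - ((Vp.card : ℤ) + (Vq.card : ℤ)) := by
    rw [BalancedComplex.Gamma, hfSE, hSpq, Finset.sum_insert (by
      rw [Finset.mem_singleton]; exact hpq), Finset.sum_singleton, hfSp, hfSq]
  rw [hGam] at hΓ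
  omega
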